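/- For the monotone tree T_{N,mono} ⊆ T_{N,free} of strictly decreasing strings on [N] (with N ≥ 2), the cumulant coefficients satisfy α_{T_{N,mono}, π} = |Ord(π)| / |π|!, where Ord(π) is the set of total orders on the blocks of π extending the nesting partial order ≺. Equivalently, α_{T_{N,mono}, π} equals the Lebesgue volume of {t ∈ (0,1]^π : V ≺ W ⟹ t_V < t_W}. -/

import Mathlib

/-- The alternating reduction of a string: replace each maximal run of
consecutive equal letters by a single occurrence of that letter. -/
def red {α : Type*} [DecidableEq α] : List α → List α
  | [] => []
  | [a] => [a]
  | a :: b :: t => if a = b then red (b :: t) else a :: red (b :: t)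

/-- A rooted subtree of the tree of alternating strings on alphabet `α`. -/
def IsRootedSubtree {α : Type*} (S : Set (List α)) : Prop :=
  (∀ s ∈ S, s.Chain' (· ≠ ·)) ∧ [] ∈ S ∧ ∀ s ∈ S, s.tail ∈ S

/-- Partitions of finite subsets of `ℕ` (finite totally ordered sets, up to
isomorphism), given by their set of blocks. -/
abbrev Blocks : Type := Finset (Finset ℕ)

/-- `π` is a non-crossing partition (of its ground set `⋃ π`). -/
def IsNC (π : Blocks) : Prop :=
  (∀ B ∈ π, B.Nonempty) ∧
  (∀ B ∈ π, ∀ C ∈ π, B ≠ C → Disjoint B C) ∧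
  (∀ B ∈ π, ∀ C ∈ π, B ≠ C →
    ¬ ∃ i₁ j₁ i₂ j₂ : ℕ, i₁ < j₁ ∧ j₁ < i₂ ∧ i₂ < j₂ ∧
      i₁ ∈ B ∧ i₂ ∈ B ∧ j₁ ∈ C ∧ j₂ ∈ C)

/-- `V` is nested inside `W`. -/
def NestedIn (V W : Finset ℕ) : Prop :=
  ∃ j ∈ W, ∃ k ∈ W, ∀ x ∈ V, j < x ∧ x < k

/-- `V` is immediately nested inside `W` (an edge of the nesting tree of `π`). -/
def ImmNested (π : Blocks) (V W : Finset ℕ) : Prop :=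
  NestedIn V W ∧ ¬ ∃ X ∈ π, NestedIn V X ∧ NestedIn X W

/-- Adjacency of blocks in the nesting tree `graph(π)` (away from the root). -/
def AdjBlocks (π : Blocks) (V W : Finset ℕ) : Prop :=
  ImmNested π V W ∨ ImmNested π W V

/-- `V` and `W` lie in the same `χ`-component of `π`: they are joined by a path
in `graph(π) ∖ {∅}` all of whose edges join blocks of the same color. -/
def sameComp {N : ℕ} (π : Blocks) (χ : Finset ℕ → Fin N) (V W : Finset ℕ) : Prop :=
  Relation.ReflTransGen
    (fun X Y => X ∈ π ∧ Y ∈ π ∧ AdjBlocks π X Y ∧ χ X = χ Y) V W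

open Classical in
noncomputable def component {N : ℕ} (π : Blocks) (χ : Finset ℕ → Fin N)
    (V : Finset ℕ) : Finset (Finset ℕ) :=
  π.filter (fun W => sameComp π χ V W)

-- The `χ`-components of `π`.
open Classical in
noncomputable def components {N : ℕ} (π : Blocks) (χ : Finset ℕ → Fin N) :
    Finset Blocks :=
  π.image (fun V => component π χ V)

/-- `L` is the chain of `V` in `π`: the list `(V, V₁, …, V_d)` consisting of `V`
followed by all blocks surrounding `V`, each nested in the next. -/
def IsChainList (π : Blocks) (V : Finset ℕ) (L : List (Finset ℕ)) : Prop :=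
  L.head? = some V ∧ (∀ W, W ∈ L.tail ↔ W ∈ π ∧ NestedIn V W) ∧
  L.Chain' (fun X Y => NestedIn X Y) ∧ L.Nodup

/-- `χ ∈ X_w(π,T)`: for every block `V`, the alternating reduction of the color
string along the chain of `V` lies in `T`. -/
def WeaklyCompatible {N : ℕ} (T : Set (List (Fin N))) (π : Blocks)
    (χ : Finset ℕ → Fin N) : Prop :=
  ∀ V ∈ π, ∀ L : List (Finset ℕ), IsChainList π V L → red (L.map χ) ∈ T

/-- Extend a coloring of the blocks of `π` by a junk value. -/
def extendColor {N : ℕ} [NeZero N] (π : Blocks)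
    (χ : {V : Finset ℕ // V ∈ π} → Fin N) : Finset ℕ → Fin N :=
  fun W => if h : W ∈ π then χ ⟨W, h⟩ else 0

-- The right-hand side of the fixed-point identity for the cumulant
-- coefficients: `n^{−|π|} Σ_{χ ∈ X_w(π,T)} Π_{χ-components π'} a(π')`.
open Classical in
noncomputable def cumulantRHS {N : ℕ} [NeZero N] (n : ℕ) (T : Set (List (Fin N)))
    (a : Blocks → ℝ) (π : Blocks) : ℝ :=
  (∑ χ : ({V : Finset ℕ // V ∈ π} → Fin N),
      if WeaklyCompatible T π (extendColor π χ) then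
        ∏ τ ∈ components π (extendColor π χ), a τ
      else 0) / (n : ℝ) ^ π.card

/-- `a` is a family of cumulant coefficients for `T`: normalized on one-block
partitions, and satisfying the fixed-point identity for all non-crossing `π`. -/
def SatisfiesFP {N : ℕ} [NeZero N] (n : ℕ) (T : Set (List (Fin N)))
    (a : Blocks → ℝ) : Prop :=
  (∀ π : Blocks, IsNC π → π.card = 1 → a π = 1) ∧
  (∀ π : Blocks, IsNC π → a π = cumulantRHS n T a π)

/-!
For `T_{N,mono}` a coloring is weakly compatible exactly when colors weakly increase inwards
along the nesting order, and two nested blocks of the same color are then joined by a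
monochromatic path.

Uniqueness: a coloring whose only component is `π` is constant, so for `N ≥ 2` and `|π| ≠ 1`
fewer than `N ^ |π|` colorings contribute `a π` to the right-hand side of the fixed-point
identity; all other terms only involve strictly smaller partitions.

Existence: write `vol ρ = e(ρ) / |ρ|!` with `e(ρ)` the number of linear extensions of the
nesting order. Since the relative orders that a uniformly random labelling of `π` induces on the
parts of a partition are independent and uniform, `∏_{τ χ-component} vol τ` is the proportion of
labellings `h` of `π` that are linear extensions on each `χ`-component. Sorting the blocks
lexicographically by `(χ, h)` turns a pair (inward-increasing `χ`, such `h`) into a pair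
(linear extension `f` of `π`, arbitrary word `w ∈ [N]^|π|`), bijectively. Hence the
right-hand side for `vol` is `e(π) N^|π| / |π|! / N^|π| = vol π`.
-/

open Finset
open scoped Nat

section Reduction
variable {α : Type*}

theorem red_cons_head? [DecidableEq α] (a : α) (l : List α) : (red (a :: l)).head? = some a := by
  induction l generalizing a with
  | nil => rfl
  | cons b l ih =>
    rw [red]
    split_ifs with h
    · exact h ▸ ih b
    · rfl

theorem isChain_red_gt_iff [LinearOrder α] :
    ∀ l : List α, (red l).IsChain (· > ·) ↔ l.IsChain (· ≥ ·)
  | [] => by simp [red]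
  | [a] => by simp [red]
  | a :: b :: l => by
    rw [red, List.isChain_cons_cons]
    split_ifs with h
    · subst h
      simp [isChain_red_gt_iff (a :: l)]
    · rw [List.isChain_cons, red_cons_head?, isChain_red_gt_iff (b :: l)]
      simp [lt_iff_le_and_ne, Ne.symm h]

end Reduction

section RelativeOrder
variable {α β : Type*} [LinearOrder β] {t : Finset α}

/-- The bijection `t ≃ Fin #t` that orders `t` as the injective map `f` does. -/
noncomputable def relOrder (f : t → β) (hf : Function.Injective f) : t ≃ Fin #t :=
  (Equiv.ofBijective (fun x => (⟨f x, mem_image_of_mem f (mem_univ x)⟩ : univ.image f))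
      ⟨fun x y hxy => hf (congrArg Subtype.val hxy), fun ⟨b, hb⟩ => by
        obtain ⟨x, -, rfl⟩ := mem_image.1 hb
        exact ⟨x, rfl⟩⟩).trans
    ((univ.image f).orderIsoOfFin (by
      rw [card_image_of_injective _ hf, card_univ, Fintype.card_coe])).symm.toEquiv

theorem relOrder_lt_relOrder {f : t → β} (hf : Function.Injective f) {x y : t} :
    relOrder f hf x < relOrder f hf y ↔ f x < f y := by
  simp only [relOrder, Equiv.trans_apply, RelIso.coe_fn_toEquiv, OrderIso.lt_iff_lt]
  exact Iff.rfl

theorem eq_relOrder {f : t → β} (hf : Function.Injective f) (g : t ≃ Fin #t)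
    (hg : ∀ x y, g x < g y ↔ f x < f y) : g = relOrder f hf := by
  have hmono : StrictMono (g.symm.trans (relOrder f hf)) := fun i j hij => by
    simpa [relOrder_lt_relOrder, ← hg] using hij
  have := Subsingleton.elim (hmono.orderIsoOfSurjective _ (Equiv.surjective _)) (OrderIso.refl _)
  refine Equiv.ext fun x => ?_
  have h : (g.symm.trans (relOrder f hf)) (g x) = g x := DFunLike.congr_fun this (g x)
  rw [Equiv.trans_apply, Equiv.symm_apply_apply] at h
  exact h.symm

end RelativeOrder

open Classical in
noncomputable def linExts {α : Type*} (r : α → α → Prop) (t : Finset α) : Finset (t ≃ Fin #t) :=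
  {f | ∀ x y : t, r x y → f x < f y}

theorem mem_linExts {α : Type*} {r : α → α → Prop} {t : Finset α} {f : t ≃ Fin #t} :
    f ∈ linExts r t ↔ ∀ x y : t, r x y → f x < f y := by
  simp [linExts]

namespace Finpartition
variable {α : Type*} [DecidableEq α] {s : Finset α} (P : Finpartition s) {n : ℕ}

theorem parts_eq_singleton_self (h : s ∈ P.parts) : P.parts = {s} :=
  eq_singleton_iff_unique_mem.2 ⟨h, fun t ht => by
    obtain ⟨x, hx⟩ := P.nonempty_of_mem_parts ht
    exact P.eq_of_mem_parts ht h hx (P.le ht hx)⟩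

noncomputable def restrictOrder (h : s ≃ Fin n) (t : P.parts) : t.1 ≃ Fin #t.1 :=
  relOrder (fun x => h (P.equivSigmaParts.symm ⟨t, x⟩))
    (h.injective.comp (P.equivSigmaParts.symm.injective.comp sigma_mk_injective))

theorem restrictOrder_lt_restrictOrder (h : s ≃ Fin n) (t : P.parts) {x y : t.1} :
    P.restrictOrder h t x < P.restrictOrder h t y ↔
      h (P.equivSigmaParts.symm ⟨t, x⟩) < h (P.equivSigmaParts.symm ⟨t, y⟩) :=
  relOrder_lt_relOrder _

/-- Precomposing with this permutation of `s` turns the relative orders `g` on the parts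
into `g'`. -/
noncomputable def partwisePerm (g g' : ∀ t : P.parts, t.1 ≃ Fin #t.1) : Equiv.Perm s :=
  P.equivSigmaParts.symm.permCongr (Equiv.sigmaCongrRight fun t => (g' t).trans (g t).symm)

theorem restrictOrder_partwisePerm_trans (g g' : ∀ t : P.parts, t.1 ≃ Fin #t.1)
    (h : s ≃ Fin n) (t : P.parts) :
    P.restrictOrder ((P.partwisePerm g g').trans h) t =
      ((g' t).trans (g t).symm).trans (P.restrictOrder h t) := by
  refine (eq_relOrder _ _ fun x y => ?_).symm
  simp [partwisePerm, Equiv.permCongr_apply, restrictOrder_lt_restrictOrder]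

theorem card_restrictOrder_fiber_le (g g' : ∀ t : P.parts, t.1 ≃ Fin #t.1) :
    #{h : s ≃ Fin n | P.restrictOrder h = g} ≤ #{h : s ≃ Fin n | P.restrictOrder h = g'} := by
  refine card_le_card_of_injOn ((P.partwisePerm g g').trans ·) (fun h hh => ?_)
    fun _ _ _ _ hhh' => ?_
  · simp only [coe_filter, mem_univ, true_and, Set.mem_ofPred_eq] at hh ⊢
    funext t
    rw [restrictOrder_partwisePerm_trans, hh]
    ext; simp
  · exact Equiv.ext fun x => by
      simpa using DFunLike.congr_fun hhh' ((P.partwisePerm g g').symm x)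

theorem card_filter_restrictOrder_mem (hn : #s = n)
    (G : ∀ t : P.parts, Finset (t.1 ≃ Fin #t.1)) :
    #{h : s ≃ Fin n | ∀ t, P.restrictOrder h t ∈ G t} * ∏ t ∈ P.parts, (#t)! =
      n ! * ∏ t, #(G t) := by
  set c := #{h : s ≃ Fin n | P.restrictOrder h = fun t => t.1.equivFin}
  have hfiber (g : ∀ t : P.parts, t.1 ≃ Fin #t.1) :
      #{h : s ≃ Fin n | P.restrictOrder h = g} = c :=
    le_antisymm (P.card_restrictOrder_fiber_le _ _) (P.card_restrictOrder_fiber_le _ _)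
  have htotal : n ! = (∏ t ∈ P.parts, (#t)!) * c := calc
    n ! = #(univ : Finset (s ≃ Fin n)) := by
      rw [card_univ, Fintype.card_equiv (s.equivFin.trans (finCongr hn)), Fintype.card_coe, hn]
    _ = ∑ g, #{h : s ≃ Fin n | P.restrictOrder h = g} :=
      card_eq_sum_card_fiberwise fun _ _ => mem_univ _
    _ = (∏ t ∈ P.parts, (#t)!) * c := by
      simp only [hfiber, sum_const, card_univ, smul_eq_mul, Fintype.card_pi]
      rw [← prod_coe_sort P.parts]
      congr 2
      ext t
      rw [Fintype.card_equiv t.1.equivFin, Fintype.card_coe]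
  have hgood : #{h : s ≃ Fin n | ∀ t, P.restrictOrder h t ∈ G t} = (∏ t, #(G t)) * c := calc
    _ = ∑ g ∈ Fintype.piFinset G,
          #{h ∈ {h : s ≃ Fin n | ∀ t, P.restrictOrder h t ∈ G t} | P.restrictOrder h = g} :=
      card_eq_sum_card_fiberwise fun h hh => Fintype.mem_piFinset.2 (mem_filter.1 hh).2
    _ = ∑ g ∈ Fintype.piFinset G, c := sum_congr rfl fun g hg => by
      rw [filter_filter, ← hfiber g]
      congr 1
      ext h
      simp only [mem_filter, mem_univ, true_and, and_iff_right_iff_imp]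
      rintro rfl
      exact Fintype.mem_piFinset.1 hg
    _ = (∏ t, #(G t)) * c := by rw [sum_const, Fintype.card_piFinset, smul_eq_mul]
  rw [hgood, htotal]
  ring

open Classical in
theorem card_linExts_parts (r : α → α → Prop) (hn : #s = n) :
    #{h : s ≃ Fin n | ∀ x y : s, y.1 ∈ P.part x.1 → r x y → h x < h y} * ∏ t ∈ P.parts, (#t)! =
      n ! * ∏ t ∈ P.parts, #(linExts r t) := by
  rw [← prod_coe_sort P.parts (fun t => #(linExts r t)), ← P.card_filter_restrictOrder_mem hn]
  congr 2
  ext h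
  simp only [mem_linExts, mem_filter, mem_univ, true_and, restrictOrder_lt_restrictOrder]
  constructor
  · intro H t x y hxy
    exact H _ _ ((P.part_eq_of_mem t.2 x.2).symm ▸ y.2) hxy
  · intro H x y hy hxy
    exact H ⟨P.part x, P.part_mem.2 x.2⟩ ⟨x, P.mem_part x.2⟩ ⟨y, hy⟩ hxy

end Finpartition

theorem Tuple.sort_symm_lt_sort_symm {α : Type*} [LinearOrder α] {k : ℕ} (w : Fin k → α)
    (i j : Fin k) :
    (Tuple.sort w).symm i < (Tuple.sort w).symm j ↔ toLex (w i, i) < toLex (w j, j) := by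
  have hmono := Tuple.eq_sort_iff'.1 (rfl : Tuple.sort w = Tuple.sort w)
  rw [← hmono.lt_iff_lt]
  simp only [Equiv.trans_apply, Equiv.apply_symm_apply, Tuple.graphEquiv₁, Equiv.coe_fn_mk]
  exact Iff.rfl

section Relabel
variable {Y α : Type*} [LinearOrder α] {k : ℕ}

/-- Trade a coloring `χ` and a labelling `h` of `Y` for the labelling `f` ordering `Y` by
`(χ, h)` lexicographically, together with the colors `w` read off along `h`. -/
noncomputable def lexRelabel : (Y → α) × (Y ≃ Fin k) ≃ (Y ≃ Fin k) × (Fin k → α) where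
  toFun p := (p.2.trans (Tuple.sort (p.1 ∘ p.2.symm)).symm, p.1 ∘ p.2.symm)
  invFun q := (q.2 ∘ q.1.trans (Tuple.sort q.2), q.1.trans (Tuple.sort q.2))
  left_inv p := by
    ext <;> simp
  right_inv := fun ⟨f, w⟩ => by
    have hw : (w ∘ f.trans (Tuple.sort w)) ∘ (f.trans (Tuple.sort w)).symm = w := by
      ext; simp
    dsimp only
    rw [hw]
    ext <;> simp

theorem lexRelabel_fst_lt_iff (p : (Y → α) × (Y ≃ Fin k)) (x y : Y) :
    (lexRelabel p).1 x < (lexRelabel p).1 y ↔ toLex (p.1 x, p.2 x) < toLex (p.1 y, p.2 y) := by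
  simp [lexRelabel, Tuple.sort_symm_lt_sort_symm]

end Relabel

section Nesting
variable {π : Blocks} {U V W X : Finset ℕ}

theorem NestedIn.trans (hUV : NestedIn U V) (hVW : NestedIn V W) : NestedIn U W := by
  obtain ⟨j, hj, k, hk, hUV⟩ := hUV
  obtain ⟨j', hj', k', hk', hVW⟩ := hVW
  exact ⟨j', hj', k', hk', fun x hx =>
    ⟨(hVW j hj).1.trans (hUV x hx).1, (hUV x hx).2.trans (hVW k hk).2⟩⟩

theorem NestedIn.min_lt (h : NestedIn V W) : W.min < V.min := by
  obtain ⟨j, hj, k, -, hjk⟩ := h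
  refine (Finset.min_le hj).trans_lt (lt_of_lt_of_le (WithTop.coe_lt_coe.mpr j.lt_succ_self) ?_)
  exact Finset.le_min_iff.mpr fun x hx => WithTop.coe_le_coe.mpr (hjk x hx).1

theorem NestedIn.irrefl (h : NestedIn V V) : False := h.min_lt.false

theorem IsNC.subset (hπ : IsNC π) {τ : Blocks} (hτ : τ ⊆ π) : IsNC τ :=
  ⟨fun B hB => hπ.1 B (hτ hB), fun B hB C hC => hπ.2.1 B (hτ hB) C (hτ hC),
    fun B hB C hC => hπ.2.2 B (hτ hB) C (hτ hC)⟩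

theorem IsNC.nestedIn_of_mem_between (hπ : IsNC π) (hW : W ∈ π) (hX : X ∈ π) (hne : W ≠ X)
    {a b c : ℕ} (ha : a ∈ X) (hb : b ∈ X) (hc : c ∈ W) (hac : a < c) (hcb : c < b) :
    NestedIn W X := by
  have hdisj := Finset.disjoint_left.mp (hπ.2.1 W hW X hX hne)
  refine ⟨a, ha, b, hb, fun w hw => ⟨?_, ?_⟩⟩
  · by_contra! hwa
    have hwa : w < a := hwa.lt_of_ne fun h => hdisj hw (h ▸ ha)
    exact hπ.2.2 W hW X hX hne ⟨w, a, c, b, hwa, hac, hcb, hw, hc, ha, hb⟩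
  · by_contra! hbw
    have hbw : b < w := hbw.lt_of_ne fun h => hdisj hw (h ▸ hb)
    exact hπ.2.2 X hX W hW hne.symm ⟨a, c, b, w, hac, hcb, hbw, ha, hb, hc, hw⟩

theorem IsNC.nestedIn_total (hπ : IsNC π) (hV : V ∈ π) (hW : W ∈ π) (hX : X ∈ π)
    (hne : W ≠ X) (hVW : NestedIn V W) (hVX : NestedIn V X) :
    NestedIn W X ∨ NestedIn X W := by
  obtain ⟨v, hv⟩ := hπ.1 V hV
  obtain ⟨jW, hjW, kW, hkW, hW'⟩ := hVW
  obtain ⟨jX, hjX, kX, hkX, hX'⟩ := hVX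
  rcases lt_trichotomy jW jX with h | h | h
  · exact .inr (hπ.nestedIn_of_mem_between hX hW hne.symm hjW hkW hjX h
      ((hX' v hv).1.trans (hW' v hv).2))
  · exact absurd (h ▸ hjX) (Finset.disjoint_left.mp (hπ.2.1 W hW X hX hne) hjW)
  · exact .inl (hπ.nestedIn_of_mem_between hW hX hne hjX hkX hjW h
      ((hW' v hv).1.trans (hX' v hv).2))

end Nesting

section ChainList
variable {π : Blocks} {V W : Finset ℕ}

theorem IsNC.exists_isChainList (hπ : IsNC π) (hV : V ∈ π) : ∃ L, IsChainList π V L := by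
  classical
  -- the blocks around `V`, listed from the inside out, i.e. by decreasing minimum
  set L := (π.filter (NestedIn V)).toList.mergeSort fun W X => decide (X.min ≤ W.min)
  have hmem : ∀ W, W ∈ L ↔ W ∈ π ∧ NestedIn V W := by simp [L]
  have hnodup : L.Nodup := (List.mergeSort_perm _ _).nodup_iff.mpr (nodup_toList _)
  have hsorted : L.Pairwise NestedIn := by
    refine ((List.pairwise_mergeSort (fun _ _ _ h₁ h₂ => ?_) (fun W X => ?_) _).and
      hnodup).imp_of_mem ?_
    · simp only [decide_eq_true_eq] at h₁ h₂ ⊢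
      exact h₂.trans h₁
    · simpa using le_total X.min W.min
    · intro W X hW hX ⟨hle, hne⟩
      rw [hmem] at hW hX
      refine (hπ.nestedIn_total hV hW.1 hX.1 hne hW.2 hX.2).resolve_right fun h => ?_
      exact (h.min_lt.trans_le (by simpa using hle)).false
  have hchain : (V :: L).Pairwise NestedIn :=
    List.pairwise_cons.mpr ⟨fun W hW => ((hmem W).1 hW).2, hsorted⟩
  exact ⟨V :: L, rfl, hmem, hchain.isChain,
    List.nodup_cons.mpr ⟨fun h => ((hmem V).1 h).2.irrefl, hnodup⟩⟩

theorem IsChainList.mem_of_mem {L : List (Finset ℕ)} (hL : IsChainList π V L) (hV : V ∈ π) :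
    ∀ W ∈ L, W ∈ π := by
  obtain ⟨hhead, htail, -⟩ := hL
  obtain ⟨L, rfl⟩ : ∃ L', L = V :: L' := by
    cases L <;> simp_all
  simp only [List.mem_cons, forall_eq_or_imp]
  exact ⟨hV, fun W hW => ((htail W).1 hW).1⟩

theorem IsNC.weaklyCompatible_iff {N : ℕ} (hπ : IsNC π) (χ : Finset ℕ → Fin N) :
    WeaklyCompatible {s : List (Fin N) | s.IsChain (· > ·)} π χ ↔
      ∀ V ∈ π, ∀ W ∈ π, NestedIn V W → χ W ≤ χ V := by
  have : IsTrans (Finset ℕ) NestedIn := ⟨fun _ _ _ => NestedIn.trans⟩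
  simp only [WeaklyCompatible, Set.mem_ofPred_eq, isChain_red_gt_iff]
  simp only [List.isChain_iff_pairwise, List.pairwise_map]
  constructor
  · intro h V hV W hW hVW
    obtain ⟨L, hL⟩ := hπ.exists_isChainList hV
    obtain ⟨L, rfl⟩ : ∃ L', L = V :: L' := by
      cases L <;> simp_all [IsChainList]
    exact List.rel_of_pairwise_cons (h V hV _ hL) ((hL.2.1 W).2 ⟨hW, hVW⟩)
  · intro h V hV L hL
    exact (hL.2.2.1.pairwise).imp_of_mem fun hX hY hXY =>
      h _ (hL.mem_of_mem hV _ hX) _ (hL.mem_of_mem hV _ hY) hXY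

end ChainList

section Components
variable {N : ℕ} {π : Blocks} {χ : Finset ℕ → Fin N} {V W : Finset ℕ}

theorem sameComp_equivalence (π : Blocks) (χ : Finset ℕ → Fin N) :
    Equivalence (sameComp π χ) :=
  ⟨fun _ => .refl, fun h => by
    induction h with
    | refl => exact .refl
    | tail _ hXY ih => exact .head ⟨hXY.2.1, hXY.1, hXY.2.2.1.symm, hXY.2.2.2.symm⟩ ih,
   .trans⟩

theorem sameComp.color_eq (h : sameComp π χ V W) : χ V = χ W := by
  induction h with
  | refl => rfl
  | tail _ h ih => exact ih.trans h.2.2.2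

open Classical in
noncomputable def compPartition (π : Blocks) (χ : Finset ℕ → Fin N) : Finpartition π :=
  Finpartition.ofSetSetoid ⟨sameComp π χ, sameComp_equivalence π χ⟩ π

theorem compPartition_parts : (compPartition π χ).parts = components π χ := rfl

open Classical in
theorem sameComp_of_mem_part {t : Blocks} (ht : t ∈ (compPartition π χ).parts) (hV : V ∈ t)
    (hW : W ∈ t) : sameComp π χ V W := by
  rw [← (compPartition π χ).part_eq_of_mem ht hV] at hW
  exact ((Finpartition.mem_part_ofSetSetoid_iff_rel _).1 hW).2.2

open Classical in
theorem mem_part_of_sameComp (hV : V ∈ π) (hW : W ∈ π) (h : sameComp π χ V W) :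
    W ∈ (compPartition π χ).part V :=
  (Finpartition.mem_part_ofSetSetoid_iff_rel _).2 ⟨hV, hW, h⟩

open Classical in
/-- Every block between `V` and `W` is squeezed to their common color, so induct on the number
of such blocks. -/
theorem sameComp_of_nestedIn (hmono : ∀ V ∈ π, ∀ W ∈ π, NestedIn V W → χ W ≤ χ V)
    {V W : Finset ℕ} (hV : V ∈ π) (hW : W ∈ π) (hVW : NestedIn V W) (hc : χ V = χ W) :
    sameComp π χ V W := by
  by_cases h : ∃ X ∈ π, NestedIn V X ∧ NestedIn X W
  · obtain ⟨X, hX, hVX, hXW⟩ := h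
    have hcX : χ V = χ X := le_antisymm (hc ▸ hmono X hX W hW hXW) (hmono V hV X hX hVX)
    exact (sameComp_of_nestedIn hmono hV hX hVX hcX).trans
      (sameComp_of_nestedIn hmono hX hW hXW (hcX ▸ hc))
  · exact .single ⟨hV, hW, .inl ⟨hVW, h⟩, hc⟩
termination_by #{X ∈ π | NestedIn V X ∧ NestedIn X W}
decreasing_by
  · refine card_lt_card ⟨fun Y hY => ?_, fun hsub => ?_⟩
    · simp only [mem_filter] at hY ⊢
      exact ⟨hY.1, hY.2.1, hY.2.2.trans hXW⟩
    · exact (mem_filter.1 (hsub (mem_filter.2 ⟨hX, hVX, hXW⟩))).2.2.irrefl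
  · refine card_lt_card ⟨fun Y hY => ?_, fun hsub => ?_⟩
    · simp only [mem_filter] at hY ⊢
      exact ⟨hY.1, hVX.trans hY.2.1, hY.2.2⟩
    · exact (mem_filter.1 (hsub (mem_filter.2 ⟨hX, hVX, hXW⟩))).2.1.irrefl

end Components

section Counting
variable {N : ℕ} [NeZero N] {π : Blocks}

@[simp]
theorem extendColor_coe (χ : π → Fin N) (V : π) : extendColor π χ V = χ V := by
  simp [extendColor]

theorem lexRelabel_mem_linExts_iff (χ : π → Fin N) (h : π ≃ Fin #π) :
    (lexRelabel (χ, h)).1 ∈ linExts (flip NestedIn) π ↔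
      (∀ V ∈ π, ∀ W ∈ π, NestedIn V W → extendColor π χ W ≤ extendColor π χ V) ∧
      ∀ V W : π, W.1 ∈ (compPartition π (extendColor π χ)).part V → NestedIn W V → h V < h W := by
  simp only [mem_linExts, flip, lexRelabel_fst_lt_iff, Prod.Lex.toLex_lt_toLex]
  constructor
  · intro H
    refine ⟨fun V hV W hW hVW => ?_, fun V W hW hWV => ?_⟩
    · simpa [extendColor, hV, hW] using (H ⟨W, hW⟩ ⟨V, hV⟩ hVW).elim le_of_lt fun h => h.1.le
    · have hc : χ V = χ W := by
        simpa using (sameComp_of_mem_part ((compPartition π _).part_mem.2 V.2)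
          ((compPartition π _).mem_part V.2) hW).color_eq
      exact ((H V W hWV).resolve_left hc.not_lt).2
  · rintro ⟨hmono, hgood⟩ V W hWV
    rcases (by simpa using hmono W W.2 V V.2 hWV : χ V ≤ χ W).lt_or_eq with hlt | hc
    · exact .inl hlt
    · refine .inr ⟨hc, hgood V W (mem_part_of_sameComp V.2 W.2 ?_) hWV⟩
      exact (sameComp_equivalence _ _).symm
        (sameComp_of_nestedIn hmono W.2 V.2 hWV (by simpa using hc.symm))

open Classical in
theorem card_monotone_colorings_componentwise_linExts :
    #{p : (π → Fin N) × (π ≃ Fin #π) |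
        (∀ V ∈ π, ∀ W ∈ π, NestedIn V W → extendColor π p.1 W ≤ extendColor π p.1 V) ∧
        ∀ V W : π, W.1 ∈ (compPartition π (extendColor π p.1)).part V → NestedIn W V →
          p.2 V < p.2 W} =
      #(linExts (flip NestedIn) π) * N ^ #π := by
  rw [card_equiv lexRelabel (t := linExts (flip NestedIn) π ×ˢ univ) fun p => ?_,
    card_product, card_univ, Fintype.card_fun, Fintype.card_fin, Fintype.card_fin]
  rw [mem_filter_univ, mem_product, lexRelabel_mem_linExts_iff, and_iff_left (mem_univ _)]

/-- The volume of `{t ∈ (0,1]^ρ | V ≺ W → t_V < t_W}`, i.e. the proportion of labellings of the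
blocks of `ρ` that are linear extensions of the nesting order. -/
noncomputable def nestingVol (ρ : Blocks) : ℝ :=
  #(linExts (flip NestedIn) ρ) / (#ρ)!

open Classical in
theorem prod_nestingVol_components (χ : π → Fin N) :
    ∏ τ ∈ components π (extendColor π χ), nestingVol τ =
      #{h : π ≃ Fin #π | ∀ V W : π, W.1 ∈ (compPartition π (extendColor π χ)).part V →
        NestedIn W V → h V < h W} / (#π)! := by
  have key := (compPartition π (extendColor π χ)).card_linExts_parts (flip NestedIn) rfl
  rw [compPartition_parts] at key
  have hfact : ∀ τ ∈ components π (extendColor π χ), ((#τ)! : ℝ) ≠ 0 := fun τ _ => by positivity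
  unfold nestingVol
  rw [eq_div_iff (by positivity), prod_div_distrib, div_mul_eq_mul_div,
    div_eq_iff (prod_ne_zero_iff.2 hfact), mul_comm]
  exact_mod_cast key.symm

end Counting

section NestingVol
variable {N : ℕ} [NeZero N]

theorem nestingVol_eq_cumulantRHS {π : Blocks} (hπ : IsNC π) :
    nestingVol π = cumulantRHS N {s : List (Fin N) | s.IsChain (· > ·)} nestingVol π := by
  classical
  have hN : (N : ℝ) ^ #π ≠ 0 := pow_ne_zero _ (Nat.cast_ne_zero.2 (NeZero.ne N))
  rw [cumulantRHS, eq_div_iff hN]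
  calc nestingVol π * N ^ #π = ((#(linExts (flip NestedIn) π) * N ^ #π : ℕ) : ℝ) / (#π)! := by
        rw [nestingVol]; push_cast; ring
    _ = _ := by
      rw [← card_monotone_colorings_componentwise_linExts, card_filter, Fintype.sum_prod_type,
        Nat.cast_sum, sum_div]
      refine sum_congr rfl fun χ _ => ?_
      rw [hπ.weaklyCompatible_iff, prod_nestingVol_components, card_filter]
      split_ifs with hmono
      · simp only [eq_true hmono, true_and]
      · simp only [hmono, false_and, if_false, sum_const_zero, Nat.cast_zero, zero_div]

theorem nestingVol_of_card_eq_one {π : Blocks} (h : #π = 1) : nestingVol π = 1 := by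
  obtain ⟨V, rfl⟩ := card_eq_one.1 h
  have : linExts (flip NestedIn) {V} = univ :=
    eq_univ_of_forall fun f => mem_linExts.2 fun x y hxy => by
      obtain rfl := Subsingleton.elim x y
      exact hxy.irrefl.elim
  rw [nestingVol, this, card_univ, Fintype.card_equiv (equivFin _), Fintype.card_coe, h]
  simp

end NestingVol

theorem prod_components_sub_prod_components {N : ℕ} {π : Blocks} {a b : Blocks → ℝ}
    (hπ : IsNC π) (hab : ∀ τ ⊂ π, IsNC τ → a τ = b τ) (χ : Finset ℕ → Fin N) :
    ∏ τ ∈ components π χ, a τ - ∏ τ ∈ components π χ, b τ =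
      if π ∈ components π χ then a π - b π else 0 := by
  rw [← compPartition_parts]
  split_ifs with h
  · rw [(compPartition π χ).parts_eq_singleton_self h, prod_singleton, prod_singleton]
  · refine sub_eq_zero.2 (prod_congr rfl fun τ hτ => ?_)
    refine hab τ ?_ (hπ.subset ((compPartition π χ).le hτ))
    exact ssubset_of_subset_of_ne ((compPartition π χ).le hτ) (ne_of_mem_of_not_mem hτ h)

section Uniqueness
variable {N : ℕ} [NeZero N] {π : Blocks}

open Classical in
theorem card_connected_colorings_lt (hN : 2 ≤ N) (h1 : #π ≠ 1) :
    #{χ : π → Fin N | π ∈ components π (extendColor π χ)} < N ^ #π := by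
  rcases π.eq_empty_or_nonempty with rfl | ⟨V, hV⟩
  · simp [components]
  have hconst : ({χ : π → Fin N | π ∈ components π (extendColor π χ)} : Finset _) ⊆
      univ.image fun (c : Fin N) (_ : π) => c := fun χ hχ => by
    rw [mem_filter_univ, ← compPartition_parts] at hχ
    refine mem_image.2 ⟨χ ⟨V, hV⟩, mem_univ _, funext fun W => ?_⟩
    simpa [extendColor, hV] using (sameComp_of_mem_part hχ hV W.2).color_eq
  have hcard : 1 < #π := lt_of_le_of_ne (card_pos.2 ⟨V, hV⟩) (Ne.symm h1)
  calc _ ≤ #(univ.image fun (c : Fin N) (_ : π) => c) := card_le_card hconst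
    _ ≤ N := card_image_le.trans_eq (card_fin N)
    _ < N ^ #π := by simpa using Nat.pow_lt_pow_right hN hcard

theorem SatisfiesFP.unique (hN : 2 ≤ N) {T : Set (List (Fin N))} {a b : Blocks → ℝ}
    (ha : SatisfiesFP N T a) (hb : SatisfiesFP N T b) (π : Blocks) (hπ : IsNC π) :
    a π = b π := by
  classical
  induction π using Finset.strongInduction with
  | H π ih =>
  by_cases h1 : #π = 1
  · rw [ha.1 π hπ h1, hb.1 π hπ h1]
  set S := #{χ : π → Fin N | WeaklyCompatible T π (extendColor π χ) ∧
    π ∈ components π (extendColor π χ)}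
  have hS : S < N ^ #π := by
    refine (card_le_card fun χ hχ => ?_).trans_lt (card_connected_colorings_lt hN h1)
    rw [mem_filter_univ] at hχ ⊢
    exact hχ.2
  have hN0 : (N : ℝ) ^ #π ≠ 0 := pow_ne_zero _ (Nat.cast_ne_zero.2 (NeZero.ne N))
  have hsum {c : Blocks → ℝ} (hc : SatisfiesFP N T c) : c π * N ^ #π =
      ∑ χ : π → Fin N, if WeaklyCompatible T π (extendColor π χ) then
        ∏ τ ∈ components π (extendColor π χ), c τ else 0 := by
    rw [hc.2 π hπ, cumulantRHS, div_mul_cancel₀ _ hN0]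
  have key : (a π - b π) * N ^ #π = S * (a π - b π) := by
    rw [sub_mul, hsum ha, hsum hb, ← sum_sub_distrib, ← nsmul_eq_mul, ← sum_const, sum_filter]
    refine sum_congr rfl fun χ _ => ?_
    have := prod_components_sub_prod_components hπ
      (fun τ hτ hτnc => ih τ hτ hτnc) (extendColor π χ)
    split_ifs <;> simp_all
  have : (a π - b π) * (N ^ #π - S) = 0 := by linear_combination key
  rcases mul_eq_zero.1 this with h | h
  · exact sub_eq_zero.1 h
  · exact absurd (sub_eq_zero.1 h) (by exact_mod_cast hS.ne')

end Uniqueness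

/-- `Ord(π)` is modelled as the bijective labellings of the blocks by `Fin |π|` in which an
outer block gets a smaller label than every block nested inside it. -/
theorem stmt12 {N : ℕ} [NeZero N] (hN : 2 ≤ N)
    (a : Blocks → ℝ)
    (ha : SatisfiesFP N {s : List (Fin N) | s.Chain' (· > ·)} a) :
    ∀ π : Blocks, IsNC π →
      a π = ({f : {V : Finset ℕ // V ∈ π} ≃ Fin π.card |
          ∀ V W : {V : Finset ℕ // V ∈ π}, NestedIn W.1 V.1 → f V < f W}.ncard : ℝ)
        / (Nat.factorial π.card : ℝ) := by
  intro π hπ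
  have hvol : SatisfiesFP N {s : List (Fin N) | s.IsChain (· > ·)} nestingVol :=
    ⟨fun _ _ => nestingVol_of_card_eq_one, fun _ => nestingVol_eq_cumulantRHS⟩
  have hord : {f : {V : Finset ℕ // V ∈ π} ≃ Fin π.card |
      ∀ V W : {V : Finset ℕ // V ∈ π}, NestedIn W.1 V.1 → f V < f W} =
      (linExts (flip NestedIn) π : Set _) := by
    ext f
    simp [mem_linExts, flip]
  rw [ha.unique hN hvol π hπ, nestingVol, hord, Set.ncard_coe_finset]
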